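/- Every snake graph has exactly two perfect matchings consisting entirely of boundary edges. -/

import Mathlib

/-- `v` is one of the four corners of the unit square tile with lower-left corner `c`. -/
def IsTileCorner (v c : ℤ × ℤ) : Prop :=
  v = c ∨ v = c + (1, 0) ∨ v = c + (0, 1) ∨ v = c + (1, 1)

/-- Two lattice points at distance one (joined by a horizontal or vertical unit edge). -/
def UnitAdj (u v : ℤ × ℤ) : Prop :=
  u - v = (1, 0) ∨ v - u = (1, 0) ∨ u - v = (0, 1) ∨ v - u = (0, 1)

/-- Lower-left corner of the `k`-th tile of the snake graph determined by the gluing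
directions `dirs` (`true` = next tile to the east, `false` = next tile to the north).
A snake graph with `d` tiles corresponds to a list `dirs` of length `d - 1`. -/
def snakeCorner (dirs : List Bool) (k : ℕ) : ℤ × ℤ :=
  ((dirs.take k).map (fun b => if b then ((1 : ℤ), (0 : ℤ)) else (0, 1))).sum

/-- The vertices of the snake graph with gluing directions `dirs`. -/
def snakeVerts (dirs : List Bool) : Set (ℤ × ℤ) :=
  {v | ∃ k ≤ dirs.length, IsTileCorner v (snakeCorner dirs k)}

/-- The snake graph with gluing directions `dirs`: edges are the unit sides of the tiles. -/
def snakeGraph (dirs : List Bool) : SimpleGraph (snakeVerts dirs) where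
  Adj u v := UnitAdj u.1 v.1 ∧
    ∃ k ≤ dirs.length, IsTileCorner u.1 (snakeCorner dirs k) ∧ IsTileCorner v.1 (snakeCorner dirs k)
  symm := by
    constructor
    rintro u v ⟨h1, k, hk, hu, hv⟩
    refine ⟨?_, k, hk, hv, hu⟩
    unfold UnitAdj at h1 ⊢
    tauto
  loopless := by
    constructor
    rintro v ⟨h1, -⟩
    rcases h1 with h | h | h | h <;> simp [Prod.ext_iff] at h

/-- An edge `{u, v}` is a boundary edge if it is a side of exactly one tile,
i.e. any two tiles having both `u` and `v` as corners coincide. -/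
def IsBoundaryEdge (dirs : List Bool) (u v : ℤ × ℤ) : Prop :=
  ∀ k k', k ≤ dirs.length → k' ≤ dirs.length →
    IsTileCorner u (snakeCorner dirs k) → IsTileCorner v (snakeCorner dirs k) →
    IsTileCorner u (snakeCorner dirs k') → IsTileCorner v (snakeCorner dirs k') → k = k'

/-! A boundary perfect matching of a snake with a tile glued onto its last tile either uses the
new outer side `pq`, or matches the two new corners `p`, `q` to the endpoints `c`, `d` of the
glued side. Deleting `pq`, respectively replacing `cp` and `dq` by `cd` (which was a boundary
edge before the gluing), is a bijection onto the boundary perfect matchings of the shorter snake.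
A single tile has exactly two of them, its two pairs of opposite sides, so every snake has two. -/

open Finset

variable {α : Type*}

def IsPerfectMatchingIn (V : Set α) (B M : Set (Sym2 α)) : Prop :=
  M ⊆ B ∧ ∀ v ∈ V, ∃! w, s(v, w) ∈ M

theorem isPerfectMatchingIn_square_iff {a b c d : α} (hab : a ≠ b) (hac : a ≠ c) (had : a ≠ d)
    (hbc : b ≠ c) (hbd : b ≠ d) (hcd : c ≠ d) {M : Set (Sym2 α)} :
    IsPerfectMatchingIn {a, b, c, d} {s(a, b), s(a, c), s(b, d), s(c, d)} M ↔
      M = {s(a, b), s(c, d)} ∨ M = {s(a, c), s(b, d)} := by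
  constructor
  · rintro ⟨hMB, hMV⟩
    obtain ⟨wa, hwa, hua⟩ := hMV a (by simp)
    obtain ⟨wb, hwb, hub⟩ := hMV b (by simp)
    obtain ⟨wc, hwc, huc⟩ := hMV c (by simp)
    obtain ⟨wd, hwd, hud⟩ := hMV d (by simp)
    have ha := hMB hwa
    have hb := hMB hwb
    have hc := hMB hwc
    have hd := hMB hwd
    simp only [Set.mem_insert_iff, Set.mem_singleton_iff, Sym2.eq_iff] at ha hb hc hd
    have hM : ∀ e ∈ M, e = s(a, b) ∨ e = s(a, c) ∨ e = s(b, d) ∨ e = s(c, d) := hMB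
    have key : s(a, b) ∈ M ∧ s(c, d) ∈ M ∧ s(a, c) ∉ M ∧ s(b, d) ∉ M ∨
        s(a, c) ∈ M ∧ s(b, d) ∈ M ∧ s(a, b) ∉ M ∧ s(c, d) ∉ M := by
      grind
    rcases key with ⟨h1, h2, h3, h4⟩ | ⟨h1, h2, h3, h4⟩
    · exact Or.inl (by ext e; grind)
    · exact Or.inr (by ext e; grind)
  · rintro (rfl | rfl) <;> refine ⟨by grind, ?_⟩ <;>
      simp only [Set.mem_insert_iff, Set.mem_singleton_iff] <;> rintro v (rfl | rfl | rfl | rfl)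
    exacts [⟨b, by grind⟩, ⟨a, by grind⟩, ⟨d, by grind⟩, ⟨c, by grind⟩,
      ⟨c, by grind⟩, ⟨d, by grind⟩, ⟨a, by grind⟩, ⟨b, by grind⟩]

theorem ncard_isPerfectMatchingIn_square {a b c d : α} (hab : a ≠ b) (hac : a ≠ c) (had : a ≠ d)
    (hbc : b ≠ c) (hbd : b ≠ d) (hcd : c ≠ d) :
    {M | IsPerfectMatchingIn {a, b, c, d} {s(a, b), s(a, c), s(b, d), s(c, d)} M}.ncard = 2 := by
  have hset : {M | IsPerfectMatchingIn {a, b, c, d} {s(a, b), s(a, c), s(b, d), s(c, d)} M} =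
      {{s(a, b), s(c, d)}, {s(a, c), s(b, d)}} :=
    Set.ext fun M => isPerfectMatchingIn_square_iff hab hac had hbc hbd hcd
  rw [hset, Set.ncard_pair]
  intro h
  have : s(a, b) ∈ ({s(a, c), s(b, d)} : Set (Sym2 α)) := h ▸ Set.mem_insert _ _
  simp only [Set.mem_insert_iff, Set.mem_singleton_iff, Sym2.eq_iff] at this
  grind

/-- `c p q d` is a square glued along its side `cd` to the graph with vertices `V` and
edges `B`. -/
structure IsSquareGluing (V : Set α) (B : Set (Sym2 α)) (c d p q : α) : Prop where
  mem_of_mem_edge : ∀ e ∈ B, ∀ x ∈ e, x ∈ V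
  glued_left_mem : c ∈ V
  glued_right_mem : d ∈ V
  new_left_notMem : p ∉ V
  new_right_notMem : q ∉ V
  glued_ne : c ≠ d
  new_ne : p ≠ q
  glued_edge_mem : s(c, d) ∈ B

def glueSquareEdges (B : Set (Sym2 α)) (c d p q : α) : Set (Sym2 α) :=
  insert s(c, p) (insert s(d, q) (insert s(p, q) (B \ {s(c, d)})))

open Classical in
noncomputable def attachSquare (c d p q : α) (M : Set (Sym2 α)) : Set (Sym2 α) :=
  if s(c, d) ∈ M then insert s(c, p) (insert s(d, q) (M \ {s(c, d)})) else insert s(p, q) M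

open Classical in
noncomputable def detachSquare (c d p q : α) (M : Set (Sym2 α)) : Set (Sym2 α) :=
  if s(p, q) ∈ M then M \ {s(p, q)} else insert s(c, d) (M \ {s(c, p), s(d, q)})

namespace IsSquareGluing

variable {V : Set α} {B M : Set (Sym2 α)} {c d p q : α} (h : IsSquareGluing V B c d p q)
include h

theorem mk_new_left_notMem (hM : M ⊆ B) (w : α) : s(p, w) ∉ M :=
  fun hw => h.new_left_notMem (h.mem_of_mem_edge _ (hM hw) p (Sym2.mem_mk_left _ _))

theorem mk_new_right_notMem (hM : M ⊆ B) (w : α) : s(q, w) ∉ M :=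
  fun hw => h.new_right_notMem (h.mem_of_mem_edge _ (hM hw) q (Sym2.mem_mk_left _ _))

theorem isPerfectMatchingIn_attachSquare (hM : IsPerfectMatchingIn V B M) :
    IsPerfectMatchingIn (insert p (insert q V)) (glueSquareEdges B c d p q)
      (attachSquare c d p q M) := by
  obtain ⟨hMB, hMV⟩ := hM
  have hpM := h.mk_new_left_notMem hMB
  have hqM := h.mk_new_right_notMem hMB
  obtain ⟨-, -, -, -, -, hcd, hpq, -⟩ := h
  unfold attachSquare glueSquareEdges
  split_ifs with hg
  · refine ⟨by grind, ?_⟩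
    rintro v (rfl | rfl | hv)
    · exact ⟨c, by grind⟩
    · exact ⟨d, by grind⟩
    obtain ⟨w, hw, huniq⟩ := hMV v hv
    by_cases hvc : v = c
    · subst hvc
      have := huniq d hg
      exact ⟨p, by grind⟩
    by_cases hvd : v = d
    · subst hvd
      have := huniq c (by simpa only [Sym2.eq_swap] using hg)
      exact ⟨q, by grind⟩
    exact ⟨w, by grind⟩
  · refine ⟨by grind, ?_⟩
    rintro v (rfl | rfl | hv)
    · exact ⟨q, by grind⟩
    · exact ⟨p, by grind⟩
    obtain ⟨w, hw, huniq⟩ := hMV v hv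
    exact ⟨w, by grind⟩

theorem mk_mem_iff_of_isPerfectMatchingIn
    (hM : IsPerfectMatchingIn (insert p (insert q V)) (glueSquareEdges B c d p q) M) :
    (s(c, p) ∈ M ↔ s(p, q) ∉ M) ∧ (s(d, q) ∈ M ↔ s(p, q) ∉ M) := by
  obtain ⟨hMB, hMV⟩ := hM
  obtain ⟨wp, hwp, hup⟩ := hMV p (by simp)
  obtain ⟨wq, hwq, huq⟩ := hMV q (by simp)
  have hBp := h.mk_new_left_notMem subset_rfl
  have hBq := h.mk_new_right_notMem subset_rfl
  obtain ⟨-, hc, hd, hp, hq, -, hpq, -⟩ := h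
  have hp := hMB hwp
  have hq := hMB hwq
  simp only [glueSquareEdges, Set.mem_insert_iff, Set.mem_sdiff, Sym2.eq_iff] at hp hq
  grind

theorem isPerfectMatchingIn_detachSquare
    (hM : IsPerfectMatchingIn (insert p (insert q V)) (glueSquareEdges B c d p q) M) :
    IsPerfectMatchingIn V B (detachSquare c d p q M) := by
  have hsq := h.mk_mem_iff_of_isPerfectMatchingIn hM
  have hBp := h.mk_new_left_notMem subset_rfl
  have hBq := h.mk_new_right_notMem subset_rfl
  obtain ⟨hMB, hMV⟩ := hM
  obtain ⟨-, -, -, hp, hq, -, -, hg⟩ := h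
  unfold detachSquare
  split_ifs with hf
  · refine ⟨by grind [glueSquareEdges], fun v hv => ?_⟩
    obtain ⟨w, hw, huniq⟩ := hMV v (by simp [hv])
    exact ⟨w, by grind⟩
  have hcp := hsq.1.2 hf
  have hdq := hsq.2.2 hf
  refine ⟨by grind [glueSquareEdges], fun v hv => ?_⟩
  obtain ⟨w, hw, huniq⟩ := hMV v (by simp [hv])
  by_cases hvc : v = c
  · subst hvc
    exact ⟨d, by grind⟩
  by_cases hvd : v = d
  · subst hvd
    exact ⟨c, by grind⟩
  refine ⟨w, ?_, fun y hy => ?_⟩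
  · simp only [Set.mem_insert_iff, Set.mem_sdiff, Set.mem_singleton_iff, Sym2.eq_iff]
    grind
  · simp only [Set.mem_insert_iff, Set.mem_sdiff, Set.mem_singleton_iff, Sym2.eq_iff] at hy
    grind

theorem detachSquare_attachSquare (hM : M ⊆ B) :
    detachSquare c d p q (attachSquare c d p q M) = M := by
  have hpM := h.mk_new_left_notMem hM
  have hqM := h.mk_new_right_notMem hM
  unfold attachSquare detachSquare
  ext e
  split_ifs <;> grind

theorem attachSquare_detachSquare
    (hM : IsPerfectMatchingIn (insert p (insert q V)) (glueSquareEdges B c d p q) M) :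
    attachSquare c d p q (detachSquare c d p q M) = M := by
  have hsq := h.mk_mem_iff_of_isPerfectMatchingIn hM
  have hBp := h.mk_new_left_notMem subset_rfl
  have hBq := h.mk_new_right_notMem subset_rfl
  obtain ⟨-, hc, hd, hp, hq, -, hpq, -⟩ := h
  have hgM : s(c, d) ∉ M := fun hg => by
    have := hM.1 hg
    simp only [glueSquareEdges, Set.mem_insert_iff, Set.mem_sdiff, Sym2.eq_iff] at this
    grind
  unfold attachSquare detachSquare
  ext e
  split_ifs <;> grind

theorem ncard_isPerfectMatchingIn_glueSquareEdges :
    {M | IsPerfectMatchingIn (insert p (insert q V)) (glueSquareEdges B c d p q) M}.ncard =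
      {M | IsPerfectMatchingIn V B M}.ncard :=
  (Set.InvOn.bijOn (f := detachSquare c d p q) (f' := attachSquare c d p q)
    ⟨fun _ hM => h.attachSquare_detachSquare hM, fun _ hM => h.detachSquare_attachSquare hM.1⟩
    (fun _ hM => h.isPerfectMatchingIn_detachSquare hM)
    (fun _ hM => h.isPerfectMatchingIn_attachSquare hM)).ncard_eq

end IsSquareGluing

theorem existsUnique_subtype_iff_of_imp {V : Set α} {P : α → Prop} (hP : ∀ w, P w → w ∈ V) :
    (∃! w : V, P w) ↔ ∃! w, P w :=
  ⟨fun ⟨w, hw, hu⟩ => ⟨w, hw, fun y hy => congrArg Subtype.val (hu ⟨y, hP y hy⟩ hy)⟩,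
    fun ⟨w, hw, hu⟩ => ⟨⟨w, hP w hw⟩, hw, fun y hy => Subtype.ext (hu y hy)⟩⟩

theorem mk_val_mem_image_map_val {V : Set α} {S : Set (Sym2 V)} {u v : V} :
    s(u.1, v.1) ∈ Sym2.map Subtype.val '' S ↔ s(u, v) ∈ S := by
  rw [← Sym2.map_mk, (Sym2.map.injective Subtype.val_injective).mem_set_image]

theorem ncard_isPerfectMatching_eq_ncard_isPerfectMatchingIn {V : Set α} (G : SimpleGraph V)
    {B : Set (Sym2 α)} (hBV : ∀ e ∈ B, ∀ x ∈ e, x ∈ V)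
    (hBG : ∀ u v : V, s(u.1, v.1) ∈ B → G.Adj u v) :
    {M : G.Subgraph | M.IsPerfectMatching ∧ ∀ u v, M.Adj u v → s(u.1, v.1) ∈ B}.ncard =
      {M | IsPerfectMatchingIn V B M}.ncard := by
  have hmemV : ∀ {M : Set (Sym2 α)}, M ⊆ B → ∀ v w, s(v, w) ∈ M → w ∈ V :=
    fun hMB v w h => hBV _ (hMB h) w (Sym2.mem_mk_right _ _)
  refine Set.BijOn.ncard_eq (f := fun M => Sym2.map Subtype.val '' M.edgeSet) ⟨?_, ?_, ?_⟩
  · rintro M ⟨hM, hMB⟩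
    have hsub : Sym2.map Subtype.val '' M.edgeSet ⊆ B := by
      rintro _ ⟨e, he, rfl⟩
      induction e using Sym2.ind with
      | _ u v => exact hMB u v he
    refine ⟨hsub, fun v hv => ?_⟩
    rw [← existsUnique_subtype_iff_of_imp (hmemV hsub v)]
    simpa only [mk_val_mem_image_map_val (u := ⟨v, hv⟩), SimpleGraph.Subgraph.mem_edgeSet] using
      SimpleGraph.Subgraph.isPerfectMatching_iff.1 hM ⟨v, hv⟩
  · rintro M ⟨hM, -⟩ N ⟨hN, -⟩ hMN
    have hE : M.edgeSet = N.edgeSet :=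
      Set.image_injective.2 (Sym2.map.injective Subtype.val_injective) hMN
    refine SimpleGraph.Subgraph.ext ?_ ?_
    · rw [SimpleGraph.Subgraph.isSpanning_iff.1 hM.2, SimpleGraph.Subgraph.isSpanning_iff.1 hN.2]
    · ext u v
      rw [← SimpleGraph.Subgraph.mem_edgeSet, hE, SimpleGraph.Subgraph.mem_edgeSet]
  · rintro M0 ⟨hMB, hMV⟩
    let M : G.Subgraph :=
      { verts := Set.univ
        Adj := fun u v => s(u.1, v.1) ∈ M0
        adj_sub := fun h => hBG _ _ (hMB h)
        edge_vert := fun _ => trivial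
        symm := ⟨fun u v h => by rwa [Sym2.eq_swap]⟩ }
    refine ⟨M, ⟨SimpleGraph.Subgraph.isPerfectMatching_iff.2 fun v => ?_, fun u v h => hMB h⟩, ?_⟩
    · exact (existsUnique_subtype_iff_of_imp (hmemV hMB v)).2 (hMV v v.2)
    · have hE : M.edgeSet = Sym2.map Subtype.val ⁻¹' M0 := by
        ext e
        induction e using Sym2.ind with
        | _ u v => rfl
      refine (congrArg _ hE).trans (Set.image_preimage_eq_of_subset fun e he => ?_)
      induction e using Sym2.ind with
      | _ u v =>
        exact ⟨s(⟨u, hBV _ (hMB he) u (Sym2.mem_mk_left _ _)⟩,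
          ⟨v, hBV _ (hMB he) v (Sym2.mem_mk_right _ _)⟩), rfl⟩

def snakeStep (b : Bool) : ℤ × ℤ := if b then (1, 0) else (0, 1)

theorem snakeCorner_eq_sum_map_snakeStep (dirs : List Bool) (k : ℕ) :
    snakeCorner dirs k = ((dirs.take k).map snakeStep).sum := rfl

theorem snakeCorner_append_of_le {dirs : List Bool} {k : ℕ} (b : Bool) (hk : k ≤ dirs.length) :
    snakeCorner (dirs ++ [b]) k = snakeCorner dirs k := by
  rw [snakeCorner, snakeCorner, List.take_append_of_le_length hk]

theorem snakeCorner_append_length_add_one (dirs : List Bool) (b : Bool) :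
    snakeCorner (dirs ++ [b]) (dirs.length + 1) = snakeCorner dirs dirs.length + snakeStep b := by
  simp [snakeCorner_eq_sum_map_snakeStep]

theorem sum_map_snakeStep_fst_add_snd (l : List Bool) :
    (l.map snakeStep).sum.1 + (l.map snakeStep).sum.2 = l.length := by
  induction l with
  | nil => simp
  | cons b l ih => cases b <;> simp [snakeStep] at * <;> omega

theorem snakeCorner_fst_add_snd {dirs : List Bool} {k : ℕ} (hk : k ≤ dirs.length) :
    (snakeCorner dirs k).1 + (snakeCorner dirs k).2 = k := by
  rw [snakeCorner_eq_sum_map_snakeStep]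
  simpa [hk] using sum_map_snakeStep_fst_add_snd (dirs.take k)

-- The corners of tile `k` have coordinate sums between `k` and `k + 2`.
theorem eq_length_of_isTileCorner_snakeCorner {dirs : List Bool} {k : ℕ} {v : ℤ × ℤ}
    (hk : k ≤ dirs.length) (hv : IsTileCorner v (snakeCorner dirs k))
    (hlevel : dirs.length + 2 ≤ v.1 + v.2) :
    k = dirs.length ∧ v = snakeCorner dirs dirs.length + (1, 1) := by
  have hsum := snakeCorner_fst_add_snd hk
  have hk' : k = dirs.length := by
    simp only [IsTileCorner, Prod.ext_iff, Prod.fst_add, Prod.snd_add] at hv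
    omega
  subst hk'
  refine ⟨rfl, ?_⟩
  simp only [IsTileCorner, Prod.ext_iff, Prod.fst_add, Prod.snd_add] at hv ⊢
  omega

def tileSides (c : ℤ × ℤ) : Finset (Sym2 (ℤ × ℤ)) :=
  {s(c, c + (1, 0)), s(c, c + (0, 1)), s(c + (1, 0), c + (1, 1)), s(c + (0, 1), c + (1, 1))}

theorem mk_mem_tileSides_iff {u v c : ℤ × ℤ} :
    s(u, v) ∈ tileSides c ↔ UnitAdj u v ∧ IsTileCorner u c ∧ IsTileCorner v c := by
  simp only [tileSides, UnitAdj, IsTileCorner, mem_insert, mem_singleton, Sym2.eq_iff,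
    Prod.ext_iff, Prod.fst_add, Prod.snd_add, Prod.fst_sub, Prod.snd_sub]
  omega

theorem isTileCorner_of_mem_tileSides {e : Sym2 (ℤ × ℤ)} {c x : ℤ × ℤ} (he : e ∈ tileSides c)
    (hx : x ∈ e) : IsTileCorner x c := by
  induction e using Sym2.ind with
  | _ u v =>
    obtain ⟨-, hu, hv⟩ := mk_mem_tileSides_iff.1 he
    rcases Sym2.mem_iff.1 hx with rfl | rfl
    exacts [hu, hv]

def sideCount (dirs : List Bool) (e : Sym2 (ℤ × ℤ)) : ℕ :=
  #{k ∈ range (dirs.length + 1) | e ∈ tileSides (snakeCorner dirs k)}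

def snakeBoundaryEdges (dirs : List Bool) : Set (Sym2 (ℤ × ℤ)) :=
  {e | sideCount dirs e = 1}

theorem sideCount_append (dirs : List Bool) (b : Bool) (e : Sym2 (ℤ × ℤ)) :
    sideCount (dirs ++ [b]) e = sideCount dirs e +
      if e ∈ tileSides (snakeCorner dirs dirs.length + snakeStep b) then 1 else 0 := by
  simp only [sideCount, card_filter, List.length_append, List.length_singleton,
    sum_range_succ _ (dirs.length + 1), snakeCorner_append_length_add_one]
  congr 1
  refine sum_congr rfl fun k hk => ?_
  rw [snakeCorner_append_of_le b (Nat.lt_succ_iff.1 (mem_range.1 hk))]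

theorem sideCount_eq_zero {dirs : List Bool} {e : Sym2 (ℤ × ℤ)} {x : ℤ × ℤ} (hx : x ∈ e)
    (hxV : x ∉ snakeVerts dirs) : sideCount dirs e = 0 := by
  refine card_eq_zero.2 (filter_eq_empty_iff.2 fun k hk he => hxV ?_)
  exact ⟨k, Nat.lt_succ_iff.1 (mem_range.1 hk), isTileCorner_of_mem_tileSides he hx⟩

theorem mem_snakeVerts_of_mem_snakeBoundaryEdges {dirs : List Bool} {e : Sym2 (ℤ × ℤ)}
    (he : e ∈ snakeBoundaryEdges dirs) {x : ℤ × ℤ} (hx : x ∈ e) : x ∈ snakeVerts dirs := by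
  by_contra hxV
  have : sideCount dirs e = 1 := he
  rw [sideCount_eq_zero hx hxV] at this
  exact zero_ne_one this

theorem mk_mem_snakeBoundaryEdges_iff {dirs : List Bool} {u v : snakeVerts dirs} :
    s(u.1, v.1) ∈ snakeBoundaryEdges dirs ↔
      (snakeGraph dirs).Adj u v ∧ IsBoundaryEdge dirs u v := by
  have hcard : ∀ s : Finset ℕ, #s = 1 ↔ s.Nonempty ∧ ∀ a ∈ s, ∀ b ∈ s, a = b := fun s => by
    rw [← one_le_card, ← card_le_one]; omega
  simp only [snakeBoundaryEdges, sideCount, Set.mem_ofPred_eq, hcard, Finset.Nonempty,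
    mem_filter, mem_range, Nat.lt_succ_iff, mk_mem_tileSides_iff, snakeGraph, IsBoundaryEdge]
  constructor
  · rintro ⟨⟨k, hk, hadj, hu, hv⟩, huniq⟩
    exact ⟨⟨hadj, k, hk, hu, hv⟩, fun k k' hk hk' hu hv hu' hv' =>
      huniq k ⟨hk, hadj, hu, hv⟩ k' ⟨hk', hadj, hu', hv'⟩⟩
  · rintro ⟨⟨hadj, k, hk, hu, hv⟩, huniq⟩
    exact ⟨⟨k, hk, hadj, hu, hv⟩, fun k ⟨hk, _, hu, hv⟩ k' ⟨hk', _, hu', hv'⟩ =>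
      huniq k k' hk hk' hu hv hu' hv'⟩

theorem isTileCorner_add_snakeStep_iff {v x : ℤ × ℤ} {b : Bool} :
    IsTileCorner v (x + snakeStep b) ↔ v = x + snakeStep b ∨ v = x + (1, 1) ∨
      v = x + snakeStep b + snakeStep b ∨ v = x + snakeStep b + (1, 1) := by
  cases b <;> simp only [IsTileCorner, snakeStep, Prod.ext_iff, Prod.fst_add, Prod.snd_add,
    Bool.false_eq_true, if_true, if_false] <;> omega

theorem tileSides_add_snakeStep (x : ℤ × ℤ) (b : Bool) :
    tileSides (x + snakeStep b) =
      {s(x + snakeStep b, x + (1, 1)), s(x + snakeStep b, x + snakeStep b + snakeStep b),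
        s(x + (1, 1), x + snakeStep b + (1, 1)),
        s(x + snakeStep b + snakeStep b, x + snakeStep b + (1, 1))} := by
  cases b
  · rw [show x + (1, 1) = x + snakeStep false + (1, 0) by simp [snakeStep, add_assoc]]
    rfl
  · rw [show x + (1, 1) = x + snakeStep true + (0, 1) by simp [snakeStep, add_assoc], tileSides,
      insert_comm, pair_comm]
    rfl

theorem isTileCorner_add_snakeStep (x : ℤ × ℤ) (b : Bool) :
    IsTileCorner (x + snakeStep b) x := by
  cases b <;> simp [IsTileCorner, snakeStep]

theorem add_snakeStep_mem_snakeVerts (dirs : List Bool) (b : Bool) :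
    snakeCorner dirs dirs.length + snakeStep b ∈ snakeVerts dirs :=
  ⟨dirs.length, le_rfl, isTileCorner_add_snakeStep _ b⟩

theorem add_one_one_mem_snakeVerts (dirs : List Bool) :
    snakeCorner dirs dirs.length + (1, 1) ∈ snakeVerts dirs :=
  ⟨dirs.length, le_rfl, Or.inr (Or.inr (Or.inr rfl))⟩

theorem snakeVerts_append (dirs : List Bool) (b : Bool) :
    snakeVerts (dirs ++ [b]) = insert (snakeCorner dirs dirs.length + snakeStep b + snakeStep b)
      (insert (snakeCorner dirs dirs.length + snakeStep b + (1, 1)) (snakeVerts dirs)) := by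
  ext v
  have hold : (∃ k ≤ dirs.length, IsTileCorner v (snakeCorner (dirs ++ [b]) k)) ↔
      v ∈ snakeVerts dirs :=
    exists_congr fun k => and_congr_right fun hk => by rw [snakeCorner_append_of_le b hk]
  change (∃ k ≤ (dirs ++ [b]).length, _) ↔ _
  simp only [Set.mem_insert_iff, List.length_append, List.length_singleton, Nat.le_add_one_iff,
    or_and_right, exists_or, exists_eq_left, snakeCorner_append_length_add_one,
    isTileCorner_add_snakeStep_iff, hold]
  have := add_snakeStep_mem_snakeVerts dirs b
  have := add_one_one_mem_snakeVerts dirs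
  grind

/- With `x` the lower-left corner of the last tile, the new tile has lower-left corner
`c = x + snakeStep b` and is glued along its side `cd`, `d = x + (1, 1)`; its other two corners
`p = c + snakeStep b` and `q = c + (1, 1)` are new. -/
theorem isSquareGluing_snakeBoundaryEdges (dirs : List Bool) (b : Bool) :
    IsSquareGluing (snakeVerts dirs) (snakeBoundaryEdges dirs)
      (snakeCorner dirs dirs.length + snakeStep b) (snakeCorner dirs dirs.length + (1, 1))
      (snakeCorner dirs dirs.length + snakeStep b + snakeStep b)
      (snakeCorner dirs dirs.length + snakeStep b + (1, 1)) := by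
  set x := snakeCorner dirs dirs.length
  have hlevel : x.1 + x.2 = dirs.length := snakeCorner_fst_add_snd le_rfl
  have hnew : ∀ v : ℤ × ℤ, (dirs.length : ℤ) + 2 ≤ v.1 + v.2 → v ≠ x + (1, 1) →
      v ∉ snakeVerts dirs :=
    fun v hv hne ⟨k, hk, hvk⟩ => hne (eq_length_of_isTileCorner_snakeCorner hk hvk hv).2
  refine ⟨fun _ he _ hx => mem_snakeVerts_of_mem_snakeBoundaryEdges he hx,
    add_snakeStep_mem_snakeVerts dirs b, add_one_one_mem_snakeVerts dirs, hnew _ ?_ ?_,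
    hnew _ ?_ ?_, ?_, ?_, ?_⟩
  rotate_left 6
  · refine card_eq_one.2 ⟨dirs.length, eq_singleton_iff_unique_mem.2 ⟨?_, fun k hk => ?_⟩⟩
    · refine mem_filter.2 ⟨by simp, mk_mem_tileSides_iff.2
        ⟨?_, isTileCorner_add_snakeStep x b, Or.inr (Or.inr (Or.inr rfl))⟩⟩
      cases b <;> simp [UnitAdj, snakeStep]
    · rw [mem_filter, mem_range, Nat.lt_succ_iff] at hk
      refine (eq_length_of_isTileCorner_snakeCorner hk.1
        (isTileCorner_of_mem_tileSides hk.2 (Sym2.mem_mk_right _ _)) ?_).1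
      simp only [Prod.fst_add, Prod.snd_add]
      omega
  all_goals cases b <;> simp [snakeStep, Prod.ext_iff] <;> omega

theorem snakeBoundaryEdges_append (dirs : List Bool) (b : Bool) :
    snakeBoundaryEdges (dirs ++ [b]) = glueSquareEdges (snakeBoundaryEdges dirs)
      (snakeCorner dirs dirs.length + snakeStep b) (snakeCorner dirs dirs.length + (1, 1))
      (snakeCorner dirs dirs.length + snakeStep b + snakeStep b)
      (snakeCorner dirs dirs.length + snakeStep b + (1, 1)) := by
  have h := isSquareGluing_snakeBoundaryEdges dirs b
  ext e
  simp only [snakeBoundaryEdges, glueSquareEdges, Set.mem_ofPred_eq, Set.mem_insert_iff,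
    Set.mem_sdiff, Set.mem_singleton_iff, sideCount_append, tileSides_add_snakeStep, mem_insert,
    mem_singleton]
  generalize snakeCorner dirs dirs.length = x at *
  have hcount_p : ∀ w, sideCount dirs s(x + snakeStep b + snakeStep b, w) = 0 :=
    fun w => sideCount_eq_zero (Sym2.mem_mk_left _ _) h.new_left_notMem
  have hcount_q : ∀ w, sideCount dirs s(x + snakeStep b + (1, 1), w) = 0 :=
    fun w => sideCount_eq_zero (Sym2.mem_mk_left _ _) h.new_right_notMem
  have hcount_cp : sideCount dirs s(x + snakeStep b, x + snakeStep b + snakeStep b) = 0 := by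
    rw [Sym2.eq_swap]; exact hcount_p _
  have hcount_dq : sideCount dirs s(x + (1, 1), x + snakeStep b + (1, 1)) = 0 := by
    rw [Sym2.eq_swap]; exact hcount_q _
  have hg : sideCount dirs s(x + snakeStep b, x + (1, 1)) = 1 := h.glued_edge_mem
  have hne : ∀ e', sideCount dirs e' = 0 → s(x + snakeStep b, x + (1, 1)) ≠ e' :=
    fun e' he' heq => by rw [← heq, hg] at he'; exact one_ne_zero he'
  split_ifs with he
  · rcases he with rfl | rfl | rfl | rfl
    · simp only [hg, hne _ hcount_cp, hne _ hcount_dq, hne _ (hcount_p _), not_true_eq_false,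
        and_false, or_false, Nat.reduceAdd, OfNat.ofNat_ne_one]
    · simp [hcount_cp]
    · simp [hcount_dq]
    · simp [hcount_p]
  · simp only [not_or] at he
    simp [he]

theorem snakeVerts_nil : snakeVerts [] = {0, (1, 0), (0, 1), (1, 1)} := by
  ext v
  simp [snakeVerts, snakeCorner, IsTileCorner]

theorem snakeBoundaryEdges_nil : snakeBoundaryEdges [] = tileSides 0 := by
  ext e
  simp only [snakeBoundaryEdges, sideCount, List.length_nil, zero_add, range_one,
    filter_singleton, Set.mem_ofPred_eq, mem_coe]
  split_ifs with he <;> simp_all [snakeCorner]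

theorem ncard_isPerfectMatchingIn_snakeBoundaryEdges (dirs : List Bool) :
    {M | IsPerfectMatchingIn (snakeVerts dirs) (snakeBoundaryEdges dirs) M}.ncard = 2 := by
  induction dirs using List.reverseRecOn with
  | nil =>
    rw [snakeVerts_nil, snakeBoundaryEdges_nil, tileSides]
    simp only [zero_add, coe_insert, coe_singleton]
    exact ncard_isPerfectMatchingIn_square (by decide) (by decide) (by decide) (by decide)
      (by decide) (by decide)
  | append_singleton dirs b ih =>
    rw [snakeVerts_append, snakeBoundaryEdges_append,
      (isSquareGluing_snakeBoundaryEdges dirs b).ncard_isPerfectMatchingIn_glueSquareEdges, ih]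

/-- Every snake graph has exactly two perfect matchings consisting entirely of
boundary edges (the minimal and the maximal matching). -/
theorem snake_two_boundary_matchings (dirs : List Bool) :
    {M : (snakeGraph dirs).Subgraph |
      M.IsPerfectMatching ∧ ∀ u v, M.Adj u v → IsBoundaryEdge dirs u.1 v.1}.ncard = 2 := by
  have hboundary : ∀ M : (snakeGraph dirs).Subgraph, ∀ u v, M.Adj u v →
      (IsBoundaryEdge dirs u.1 v.1 ↔ s(u.1, v.1) ∈ snakeBoundaryEdges dirs) := fun M u v huv => by
    rw [mk_mem_snakeBoundaryEdges_iff, and_iff_right (M.adj_sub huv)]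
  have hset : {M : (snakeGraph dirs).Subgraph |
      M.IsPerfectMatching ∧ ∀ u v, M.Adj u v → IsBoundaryEdge dirs u.1 v.1} =
      {M | M.IsPerfectMatching ∧ ∀ u v, M.Adj u v → s(u.1, v.1) ∈ snakeBoundaryEdges dirs} :=
    Set.ext fun M => and_congr_right fun _ =>
      forall₂_congr fun u v => imp_congr_right (hboundary M u v)
  rw [hset, ncard_isPerfectMatching_eq_ncard_isPerfectMatchingIn _
    (fun _ he _ hx => mem_snakeVerts_of_mem_snakeBoundaryEdges he hx)
    (fun _ _ h => (mk_mem_snakeBoundaryEdges_iff.1 h).1)]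
  exact ncard_isPerfectMatchingIn_snakeBoundaryEdges dirs
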